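/- Let φ_i,...,φ_h be the seven Kähler 2-forms of the complex structures R_i, R_j, R_k, R_e, R_f, R_g, R_h on 𝕆 ≅ ℝ⁸ (right multiplication by the seven standard unit imaginary octonions), given in coordinates by φ_i=-dx₁₂+dx₃₄+dx₅₆-dx₇₈, φ_j=-dx₁₃-dx₂₄+dx₅₇+dx₆₈, φ_k=-dx₁₄+dx₂₃+dx₅₈-dx₆₇, φ_e=-dx₁₅-dx₂₆-dx₃₇-dx₄₈, φ_f=-dx₁₆+dx₂₅-dx₃₈+dx₄₇, φ_g=-dx₁₇+dx₂₈+dx₃₅-dx₄₆, φ_h=-dx₁₈-dx₂₇+dx₃₆+dx₄₅. Then the Cayley calibration satisfies Φ_{Spin(7)} = -(1/6)(φ_i² + φ_j² + φ_k² + φ_e² + φ_f² + φ_g² + φ_h²). -/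
import Mathlib


noncomputable section

/-- The exterior algebra of (the dual of) ℝ⁸; forms on ℝ⁸. -/
abbrev Ext8 := ExteriorAlgebra ℝ (Fin 8 → ℝ)

/-- The coordinate 1-forms `dx₁, …, dx₈` (0-indexed). -/
def dx (a : Fin 8) : Ext8 := ExteriorAlgebra.ι ℝ (Pi.single a 1)

/-- `dx_a ∧ dx_b`. -/
def w2 (a b : Fin 8) : Ext8 := dx a * dx b

/-- `dx_a ∧ dx_b ∧ dx_c ∧ dx_d`. -/
def w4 (a b c d : Fin 8) : Ext8 := dx a * dx b * dx c * dx d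

/- The seven Kähler 2-forms of the complex structures R_i,…,R_h on 𝕆 ≅ ℝ⁸
(right multiplication by the standard unit imaginary octonions), 0-indexed coordinates. -/
def φi : Ext8 := -w2 0 1 + w2 2 3 + w2 4 5 - w2 6 7
def φj : Ext8 := -w2 0 2 - w2 1 3 + w2 4 6 + w2 5 7
def φk : Ext8 := -w2 0 3 + w2 1 2 + w2 4 7 - w2 5 6
def φe : Ext8 := -w2 0 4 - w2 1 5 - w2 2 6 - w2 3 7
def φf : Ext8 := -w2 0 5 + w2 1 4 - w2 2 7 + w2 3 6
def φg : Ext8 := -w2 0 6 + w2 1 7 + w2 2 4 - w2 3 5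
def φh : Ext8 := -w2 0 7 - w2 1 6 + w2 2 5 + w2 3 4

/-- The Cayley calibration
`Φ_{Spin(7)} = dx₁₂₃₄+dx₁₂₅₆+dx₁₃₅₇+dx₁₃₆₈-dx₁₂₇₈-dx₁₄₆₇+dx₁₄₅₈ + ⋆(same)`. -/
def ΦSpin7 : Ext8 :=
  w4 0 1 2 3 + w4 0 1 4 5 + w4 0 2 4 6 + w4 0 2 5 7 - w4 0 1 6 7 - w4 0 3 5 6 + w4 0 3 4 7
  + w4 4 5 6 7 + w4 2 3 6 7 + w4 1 3 5 7 + w4 1 3 4 6 - w4 2 3 4 5 - w4 1 2 4 7 + w4 1 2 5 6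


lemma dx_sq (a : Fin 8) : dx a * dx a = 0 := ExteriorAlgebra.ι_sq_zero _

@[simp] lemma dx_sq' (a : Fin 8) (x : Ext8) : dx a * (dx a * x) = 0 := by
  rw [← mul_assoc, dx_sq, zero_mul]

lemma dx_swap (a b : Fin 8) (_h : b < a) : dx a * dx b = -(dx b * dx a) := by
  have := ExteriorAlgebra.ι_add_mul_swap (R := ℝ) (M := Fin 8 → ℝ)
    (Pi.single a (1:ℝ)) (Pi.single b 1)
  unfold dx
  exact eq_neg_of_add_eq_zero_left this

lemma dx_swap' (a b : Fin 8) (h : b < a) (x : Ext8) :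
    dx a * (dx b * x) = -(dx b * (dx a * x)) := by
  rw [← mul_assoc, dx_swap a b h, neg_mul, mul_assoc]

/-- `Φ_{Spin(7)} = -(1/6)(φ_i² + φ_j² + φ_k² + φ_e² + φ_f² + φ_g² + φ_h²)`. -/
theorem cayley_calibration_from_phi :
    ΦSpin7 = -(1/6 : ℝ) • (φi^2 + φj^2 + φk^2 + φe^2 + φf^2 + φg^2 + φh^2) := by
  simp only [ΦSpin7, φi, φj, φk, φe, φf, φg, φh, w4, w2, pow_two, mul_add, add_mul, neg_mul,
    mul_neg, sub_eq_add_neg, neg_add, neg_neg, mul_assoc]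
  simp (config := { decide := true }) only [dx_sq', dx_swap', dx_sq, dx_swap, neg_neg, mul_neg,
    neg_add, mul_zero, neg_zero, add_zero, zero_add]
  module
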